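/- arXiv:2304.01859 — 5 statements merged into one kernel-verified Lean document; each statement's English description precedes it below -/
import Mathlib

section
/- Let (A,B,C,D) be a discrete-time LTI system with state dimension n, input dimension m, output dimension p. Let 1 ≤ ν ≤ L, assume the depth-ν observability matrix [C; CA; …; CA^{ν−1}] has rank n, and let (u^d, y^d) be sequences such that the column span of H = [𝓗_L(u^d); 𝓗_L(y^d)] equals the finite-horizon behavior B|_L of the system. Let Π ∈ ℝ^{(m+p)×(m+p)} be symmetric. Then the following are equivalent: (i) for every g ∈ ℝ^{N−L+1} such that the first ν input samples and first ν output samples of H·g are zero, it holds that (H·g)ᵀ Π_L (H·g) ≥ 0; (ii) the system is (L−ν)-dissipative with respect to Π. -/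
open Matrix

/-- Block Hankel matrix with depth `L` of a sequence `z(0),…,z(N-1)` of vectors in `ℝ^q`. -/
noncomputable def blockHankel {N q : ℕ} (L : ℕ) (hLN : L ≤ N)
    (z : Fin N → Fin q → ℝ) : Matrix (Fin L × Fin q) (Fin (N - L + 1)) ℝ :=
  fun r j => z ⟨r.1.val + j.val, by have h1 := r.1.isLt; have h2 := j.isLt; omega⟩ r.2

/-- `(u, y)` is a length-`L` trajectory of the LTI system `(A, B, C, D)`. -/
def IsTrajectory {n m p : ℕ} (A : Matrix (Fin n) (Fin n) ℝ) (B : Matrix (Fin n) (Fin m) ℝ)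
    (C : Matrix (Fin p) (Fin n) ℝ) (D : Matrix (Fin p) (Fin m) ℝ) (L : ℕ)
    (u : Fin L → Fin m → ℝ) (y : Fin L → Fin p → ℝ) : Prop :=
  ∃ x : Fin (L + 1) → Fin n → ℝ,
    ∀ k : Fin L,
      x k.succ = A.mulVec (x k.castSucc) + B.mulVec (u k) ∧
      y k = C.mulVec (x k.castSucc) + D.mulVec (u k)

/-- Finite-horizon observability matrix `[C; CA; …; CA^{ν-1}]` of depth `ν`. -/
noncomputable def obsMat {n p : ℕ} (A : Matrix (Fin n) (Fin n) ℝ)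
    (C : Matrix (Fin p) (Fin n) ℝ) (ν : ℕ) : Matrix (Fin ν × Fin p) (Fin n) ℝ :=
  fun r j => (C * A ^ (r.1 : ℕ)) r.2 j

/-- `Π_L = [[I_L ⊗ Q, I_L ⊗ S], [I_L ⊗ Sᵀ, I_L ⊗ R]]` for `Π = [[Q, S], [Sᵀ, R]]`,
acting on stacked input-output vectors. -/
def kronPi {m p L : ℕ} (P : Matrix (Fin m ⊕ Fin p) (Fin m ⊕ Fin p) ℝ) :
    Matrix ((Fin L × Fin m) ⊕ (Fin L × Fin p)) ((Fin L × Fin m) ⊕ (Fin L × Fin p)) ℝ :=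
  fun r c =>
    if Sum.elim Prod.fst Prod.fst r = Sum.elim Prod.fst Prod.fst c then
      P (Sum.map Prod.snd Prod.snd r) (Sum.map Prod.snd Prod.snd c)
    else 0

/-- The system `(A, B, C, D)` is `K`-dissipative with respect to the supply rate `Π`:
every length-`K` trajectory with zero initial state has nonnegative total supply. -/
def LDissipative {n m p : ℕ} (A : Matrix (Fin n) (Fin n) ℝ) (B : Matrix (Fin n) (Fin m) ℝ)
    (C : Matrix (Fin p) (Fin n) ℝ) (D : Matrix (Fin p) (Fin m) ℝ) (K : ℕ)
    (P : Matrix (Fin m ⊕ Fin p) (Fin m ⊕ Fin p) ℝ) : Prop :=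
  ∀ (u : Fin K → Fin m → ℝ) (y : Fin K → Fin p → ℝ) (x : Fin (K + 1) → Fin n → ℝ),
    x 0 = 0 →
    (∀ k : Fin K,
      x k.succ = A.mulVec (x k.castSucc) + B.mulVec (u k) ∧
      y k = C.mulVec (x k.castSucc) + D.mulVec (u k)) →
    0 ≤ ∑ k : Fin K, Sum.elim (u k) (y k) ⬝ᵥ P.mulVec (Sum.elim (u k) (y k))

lemma kronPi_ll {m p L : ℕ} (P : Matrix (Fin m ⊕ Fin p) (Fin m ⊕ Fin p) ℝ) (i j : Fin L) (a b : Fin m) :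
    kronPi (L := L) P (Sum.inl (i, a)) (Sum.inl (j, b)) = if i = j then P (Sum.inl a) (Sum.inl b) else 0 := rfl
lemma kronPi_lr {m p L : ℕ} (P : Matrix (Fin m ⊕ Fin p) (Fin m ⊕ Fin p) ℝ) (i j : Fin L) (a : Fin m) (b : Fin p) :
    kronPi (L := L) P (Sum.inl (i, a)) (Sum.inr (j, b)) = if i = j then P (Sum.inl a) (Sum.inr b) else 0 := rfl
lemma kronPi_rl {m p L : ℕ} (P : Matrix (Fin m ⊕ Fin p) (Fin m ⊕ Fin p) ℝ) (i j : Fin L) (a : Fin p) (b : Fin m) :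
    kronPi (L := L) P (Sum.inr (i, a)) (Sum.inl (j, b)) = if i = j then P (Sum.inr a) (Sum.inl b) else 0 := rfl
lemma kronPi_rr {m p L : ℕ} (P : Matrix (Fin m ⊕ Fin p) (Fin m ⊕ Fin p) ℝ) (i j : Fin L) (a b : Fin p) :
    kronPi (L := L) P (Sum.inr (i, a)) (Sum.inr (j, b)) = if i = j then P (Sum.inr a) (Sum.inr b) else 0 := rfl

/-- The `Π_L` quadratic form of a stacked input-output vector is the sum of
the per-sample supply rates. -/
lemma kronPi_qform {m p L : ℕ} (P : Matrix (Fin m ⊕ Fin p) (Fin m ⊕ Fin p) ℝ)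
    (su : Fin L × Fin m → ℝ) (sy : Fin L × Fin p → ℝ) :
    Sum.elim su sy ⬝ᵥ (kronPi P).mulVec (Sum.elim su sy) =
    ∑ k : Fin L, Sum.elim (fun a => su (k,a)) (fun a => sy (k,a)) ⬝ᵥ
      P.mulVec (Sum.elim (fun a => su (k,a)) (fun a => sy (k,a))) := by
  simp only [dotProduct, Matrix.mulVec, kronPi_ll, kronPi_lr, kronPi_rl, kronPi_rr, Fintype.sum_sum_type, Fintype.sum_prod_type,
    Sum.elim_inl, Sum.elim_inr, Sum.map_inl, Sum.map_inr, ite_mul, zero_mul,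
    Finset.sum_ite_irrel, Finset.sum_const_zero, Finset.sum_ite_eq, Finset.mem_univ, if_true]
  rw [← Finset.sum_add_distrib]

/-- A matrix of full column rank has trivial kernel. -/
lemma rank_ker_zero {K : Type*} [Fintype K] {n : ℕ} (M : Matrix K (Fin n) ℝ) (h : M.rank = n)
    {x : Fin n → ℝ} (hx : M.mulVec x = 0) : x = 0 := by
  have h1 := M.mulVecLin.finrank_range_add_finrank_ker
  rw [show Module.finrank ℝ (LinearMap.range M.mulVecLin) = M.rank from rfl, h,
    Module.finrank_pi, Fintype.card_fin] at h1
  have hker : LinearMap.ker M.mulVecLin = ⊥ := by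
    have : Module.finrank ℝ (LinearMap.ker M.mulVecLin) = 0 := by omega
    exact Submodule.finrank_eq_zero.mp this
  have : x ∈ LinearMap.ker M.mulVecLin := by simpa [Matrix.mulVecLin] using hx
  simpa [hker] using this

/-- Splitting off the first `ν` (vanishing) terms of a sum over `Fin L`. -/
lemma sum_shift {M : Type*} [AddCommMonoid M] {L ν : ℕ} (hνL : ν ≤ L) (f : Fin L → M)
    (h0 : ∀ k : Fin L, (k:ℕ) < ν → f k = 0) :
    ∑ k : Fin L, f k = ∑ j : Fin (L - ν), f ⟨ν + j, by omega⟩ := by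
  have hL : ν + (L - ν) = L := by omega
  rw [← (finCongr hL).sum_comp f, Fin.sum_univ_add]
  rw [Finset.sum_eq_zero fun i _ => h0 _ (by simp)]
  simp only [zero_add]
  exact Finset.sum_congr rfl fun j _ => by congr 1

/-- Prepending `ν` zero samples to a length-`L-ν` trajectory starting at `0`. -/
lemma extend_traj {n m p L ν : ℕ} (A : Matrix (Fin n) (Fin n) ℝ) (B : Matrix (Fin n) (Fin m) ℝ)
    (C : Matrix (Fin p) (Fin n) ℝ) (D : Matrix (Fin p) (Fin m) ℝ) (hνL : ν ≤ L)
    (u : Fin (L - ν) → Fin m → ℝ) (y : Fin (L - ν) → Fin p → ℝ)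
    (x : Fin (L - ν + 1) → Fin n → ℝ) (hx0 : x 0 = 0)
    (hdyn : ∀ k : Fin (L - ν), x k.succ = A.mulVec (x k.castSucc) + B.mulVec (u k) ∧
        y k = C.mulVec (x k.castSucc) + D.mulVec (u k)) :
    IsTrajectory A B C D L
      (fun k a => if h : ν ≤ (k : ℕ) then u ⟨(k : ℕ) - ν, by omega⟩ a else 0)
      (fun k a => if h : ν ≤ (k : ℕ) then y ⟨(k : ℕ) - ν, by omega⟩ a else 0) := by
  refine ⟨fun k => if h : ν ≤ (k : ℕ) then x ⟨(k : ℕ) - ν, by omega⟩ else 0, fun k => ?_⟩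
  by_cases h : ν ≤ (k : ℕ)
  · have h1 : ν ≤ (k : ℕ) + 1 := by omega
    obtain ⟨hd1, hd2⟩ := hdyn ⟨(k : ℕ) - ν, by omega⟩
    have e1 : ((⟨(k : ℕ) - ν, by omega⟩ : Fin (L - ν)).succ) =
        (⟨(k : ℕ) + 1 - ν, by omega⟩ : Fin (L - ν + 1)) := Fin.ext (by simp; omega)
    have e2 : ((⟨(k : ℕ) - ν, by omega⟩ : Fin (L - ν)).castSucc) =
        (⟨(k : ℕ) - ν, by omega⟩ : Fin (L - ν + 1)) := rfl
    rw [e1, e2] at hd1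
    rw [e2] at hd2
    constructor
    · simp only [Fin.val_succ, Fin.coe_castSucc, dif_pos h, dif_pos h1]
      exact hd1
    · simp only [Fin.coe_castSucc, dif_pos h]
      exact hd2
  · constructor
    · by_cases h1 : ν ≤ (k : ℕ) + 1
      · simp only [Fin.val_succ, Fin.coe_castSucc, dif_pos h1, dif_neg h]
        have e0 : (⟨(k : ℕ) + 1 - ν, by omega⟩ : Fin (L - ν + 1)) = 0 := Fin.ext (by simp; omega)
        rw [e0, hx0]
        show (0 : Fin n → ℝ) = A.mulVec 0 + B.mulVec 0
        simp
      · simp only [Fin.val_succ, Fin.coe_castSucc, dif_neg h1, dif_neg h]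
        show (0 : Fin n → ℝ) = A.mulVec 0 + B.mulVec 0
        simp
    · simp only [Fin.coe_castSucc, dif_neg h]
      show (0 : Fin p → ℝ) = C.mulVec 0 + D.mulVec 0
      simp

set_option maxHeartbeats 1000000 in
/-- **Data-driven `(L-ν)`-dissipativity.** Suppose the depth-`ν` observability matrix of
`(A, C)` has rank `n` and the column span of the stacked Hankel matrix of the data
`(u^d, y^d)` equals the finite-horizon behavior `𝔅|_L`. Then nonnegativity of the
`Π_L`-quadratic form on all Hankel-generated trajectories whose first `ν` input and
output samples vanish is equivalent to `(L-ν)`-dissipativity with respect to `Π`. -/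
theorem data_driven_dissipativity {n m p N L ν : ℕ}
    (A : Matrix (Fin n) (Fin n) ℝ) (B : Matrix (Fin n) (Fin m) ℝ)
    (C : Matrix (Fin p) (Fin n) ℝ) (D : Matrix (Fin p) (Fin m) ℝ)
    (hν : 1 ≤ ν) (hνL : ν ≤ L) (hLN : L ≤ N)
    (hobs : (obsMat A C ν).rank = n)
    (ud : Fin N → Fin m → ℝ) (yd : Fin N → Fin p → ℝ)
    (hspan : ∀ (su : Fin L × Fin m → ℝ) (sy : Fin L × Fin p → ℝ),
      (∃ g : Fin (N - L + 1) → ℝ,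
        (blockHankel L hLN ud).mulVec g = su ∧ (blockHankel L hLN yd).mulVec g = sy) ↔
      IsTrajectory A B C D L (fun k a => su (k, a)) (fun k a => sy (k, a)))
    (P : Matrix (Fin m ⊕ Fin p) (Fin m ⊕ Fin p) ℝ) (hP : P.IsSymm) :
    (∀ g : Fin (N - L + 1) → ℝ,
        (∀ c : Fin L × Fin m, (c.1 : ℕ) < ν → (blockHankel L hLN ud).mulVec g c = 0) →
        (∀ c : Fin L × Fin p, (c.1 : ℕ) < ν → (blockHankel L hLN yd).mulVec g c = 0) →
        0 ≤ Sum.elim ((blockHankel L hLN ud).mulVec g) ((blockHankel L hLN yd).mulVec g) ⬝ᵥ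
            (kronPi P).mulVec
              (Sum.elim ((blockHankel L hLN ud).mulVec g)
                ((blockHankel L hLN yd).mulVec g))) ↔
      LDissipative A B C D (L - ν) P := by
  constructor
  · -- (i) → (ii)
    intro hi u y x hx0 hdyn
    obtain ⟨g, hgu, hgy⟩ := (hspan
        (fun c => if h : ν ≤ (c.1 : ℕ) then u ⟨(c.1 : ℕ) - ν, by omega⟩ c.2 else 0)
        (fun c => if h : ν ≤ (c.1 : ℕ) then y ⟨(c.1 : ℕ) - ν, by omega⟩ c.2 else 0)).mpr
      (extend_traj A B C D hνL u y x hx0 hdyn)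
    have hq := hi g (fun c hc => by rw [hgu]; exact dif_neg (by omega))
      (fun c hc => by rw [hgy]; exact dif_neg (by omega))
    rw [hgu, hgy, kronPi_qform] at hq
    rw [sum_shift hνL _ (fun k hk => by
      have e1 : (fun a => if h : ν ≤ (k : ℕ) then u ⟨(k : ℕ) - ν, by omega⟩ a else 0) =
          (0 : Fin m → ℝ) := funext fun a => dif_neg (by omega)
      have e2 : (fun a => if h : ν ≤ (k : ℕ) then y ⟨(k : ℕ) - ν, by omega⟩ a else 0) =
          (0 : Fin p → ℝ) := funext fun a => dif_neg (by omega)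
      rw [e1, e2]
      simp [Sum.elim_const_const])] at hq
    refine le_trans hq (le_of_eq (Finset.sum_congr rfl fun j _ => ?_))
    have eu : (fun a => if h : ν ≤ ν + (j : ℕ) then u ⟨ν + (j : ℕ) - ν, by omega⟩ a else 0)
        = u j := by
      funext a
      rw [dif_pos (Nat.le_add_right ν (j : ℕ))]
      have : (⟨ν + (j : ℕ) - ν, by omega⟩ : Fin (L - ν)) = j := Fin.ext (by simp)
      rw [this]
    have ey : (fun a => if h : ν ≤ ν + (j : ℕ) then y ⟨ν + (j : ℕ) - ν, by omega⟩ a else 0)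
        = y j := by
      funext a
      rw [dif_pos (Nat.le_add_right ν (j : ℕ))]
      have : (⟨ν + (j : ℕ) - ν, by omega⟩ : Fin (L - ν)) = j := Fin.ext (by simp)
      rw [this]
    rw [eu, ey]
  · -- (ii) → (i)
    intro hd g hzu hzy
    obtain ⟨xe, hdyn⟩ := (hspan ((blockHankel L hLN ud).mulVec g)
      ((blockHankel L hLN yd).mulVec g)).mp ⟨g, rfl, rfl⟩
    -- The state evolves freely for the first ν steps.
    have hxk : ∀ k : ℕ, ∀ hk : k ≤ ν, xe ⟨k, by omega⟩ = (A ^ k).mulVec (xe ⟨0, by omega⟩) := by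
      intro k
      induction k with
      | zero => intro _; simp [Matrix.one_mulVec]
      | succ k ih =>
        intro hk
        obtain ⟨hd1, _⟩ := hdyn ⟨k, by omega⟩
        have hu0 : (fun a => (blockHankel L hLN ud).mulVec g (⟨k, by omega⟩, a))
            = (0 : Fin m → ℝ) :=
          funext fun a => hzu (⟨k, by omega⟩, a) (by simpa using hk)
        have hd1' : xe ⟨k + 1, by omega⟩ = A.mulVec (xe ⟨k, by omega⟩) +
            B.mulVec (fun a => (blockHankel L hLN ud).mulVec g (⟨k, by omega⟩, a)) := hd1
        rw [hu0] at hd1'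
        rw [hd1', Matrix.mulVec_zero, add_zero, ih (by omega), Matrix.mulVec_mulVec, ← pow_succ']
    -- Zero inputs and outputs in the first ν samples force zero initial state.
    have hx0 : xe ⟨0, by omega⟩ = 0 := by
      apply rank_ker_zero (obsMat A C ν) hobs
      funext r
      obtain ⟨i, q⟩ := r
      obtain ⟨_, hd2⟩ := hdyn ⟨(i : ℕ), by omega⟩
      have hu0 : (fun a => (blockHankel L hLN ud).mulVec g (⟨(i : ℕ), by omega⟩, a))
          = (0 : Fin m → ℝ) :=
        funext fun a => hzu (⟨(i : ℕ), by omega⟩, a) (by simpa using i.isLt)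
      have hy0 : (blockHankel L hLN yd).mulVec g (⟨(i : ℕ), by omega⟩, q) = 0 :=
        hzy _ (by simpa using i.isLt)
      have hd2' : (fun b => (blockHankel L hLN yd).mulVec g (⟨(i : ℕ), by omega⟩, b)) =
          C.mulVec (xe ⟨(i : ℕ), by omega⟩) +
          D.mulVec (fun a => (blockHankel L hLN ud).mulVec g (⟨(i : ℕ), by omega⟩, a)) := hd2
      rw [hu0] at hd2'
      have hC : C.mulVec (xe ⟨(i : ℕ), by omega⟩) q = 0 := by
        have h4 := congrFun hd2' q
        simp only [Pi.add_apply, Matrix.mulVec_zero, Pi.zero_apply, add_zero] at h4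
        exact h4.symm.trans hy0
      rw [hxk (i : ℕ) (le_of_lt i.isLt)] at hC
      show ((obsMat A C ν).mulVec (xe ⟨0, by omega⟩)) (i, q) = 0
      rw [← hC]
      simp only [obsMat, Matrix.mulVec, dotProduct, Matrix.mul_apply,
        Finset.sum_mul, Finset.mul_sum, mul_assoc]
      exact Finset.sum_comm
    have hxν : xe ⟨ν, by omega⟩ = 0 := by
      rw [hxk ν le_rfl, hx0, Matrix.mulVec_zero]
    -- Apply dissipativity to the shifted trajectory.
    have hdiss := hd (fun j a => (blockHankel L hLN ud).mulVec g (⟨ν + (j : ℕ), by omega⟩, a))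
      (fun j b => (blockHankel L hLN yd).mulVec g (⟨ν + (j : ℕ), by omega⟩, b))
      (fun j => xe ⟨ν + (j : ℕ), by omega⟩)
      (by simpa using hxν)
      (by
        intro j
        obtain ⟨hd1, hd2⟩ := hdyn ⟨ν + (j : ℕ), by omega⟩
        have e1 : ((⟨ν + (j : ℕ), by omega⟩ : Fin L).succ) =
            (⟨ν + ((j : ℕ) + 1), by omega⟩ : Fin (L + 1)) := Fin.ext (by simp; omega)
        have e2 : ((⟨ν + (j : ℕ), by omega⟩ : Fin L).castSucc) =
            (⟨ν + (j : ℕ), by omega⟩ : Fin (L + 1)) := rfl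
        rw [e1, e2] at hd1
        rw [e2] at hd2
        exact ⟨hd1, hd2⟩)
    rw [kronPi_qform]
    rw [sum_shift hνL _ (fun k hk => by
      have e1 : (fun a => (blockHankel L hLN ud).mulVec g (k, a)) = (0 : Fin m → ℝ) :=
        funext fun a => hzu (k, a) hk
      have e2 : (fun b => (blockHankel L hLN yd).mulVec g (k, b)) = (0 : Fin p → ℝ) :=
        funext fun b => hzy (k, b) hk
      rw [e1, e2]
      simp [Sum.elim_const_const])]
    exact le_trans hdiss (le_of_eq (Finset.sum_congr rfl fun j _ => rfl))
end

section
/- Let Q ∈ ℝ^{n×n} be symmetric and B ∈ ℝ^{m×n} with rank(B) < n. Then xᵀ Q x > 0 holds for all nonzero x ∈ ℝ^n with B x = 0 if and only if there exists μ ∈ ℝ such that Q + μ Bᵀ B is positive definite. -/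
open Matrix Filter Topology

private lemma quad_cont {n m : ℕ} (M : Matrix (Fin n) (Fin m) ℝ) (i : Fin n) :
    Continuous fun x : Fin m → ℝ => M.mulVec x i := by
  simp only [mulVec, dotProduct]
  exact continuous_finset_sum _ fun j _ => continuous_const.mul (continuous_apply j)

/-- **Finsler's Lemma (definite version).**
For symmetric `Q` and `B` with `rank B < n`, the quadratic form `xᵀ Q x` is positive
on all nonzero `x` in the null space of `B` if and only if there is `μ ∈ ℝ` such that
`Q + μ Bᵀ B` is positive definite. -/
theorem finsler_pd {n m : ℕ}
    (Q : Matrix (Fin n) (Fin n) ℝ) (hQ : Q.IsSymm)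
    (B : Matrix (Fin m) (Fin n) ℝ) (hB : B.rank < n) :
    (∀ x : Fin n → ℝ, x ≠ 0 → B.mulVec x = 0 → 0 < x ⬝ᵥ Q.mulVec x) ↔
      ∃ μ : ℝ, (Q + μ • (Bᵀ * B)).PosDef := by
  classical
  set f : (Fin n → ℝ) → ℝ := fun x => x ⬝ᵥ Q.mulVec x with hf_def
  set g : (Fin n → ℝ) → ℝ := fun x => B.mulVec x ⬝ᵥ B.mulVec x with hg_def
  have hform : ∀ (μ : ℝ) (x : Fin n → ℝ),
      x ⬝ᵥ (Q + μ • (Bᵀ * B)).mulVec x = f x + μ * g x := by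
    intro μ x
    have key : x ⬝ᵥ (Bᵀ * B).mulVec x = B.mulVec x ⬝ᵥ B.mulVec x := by
      rw [← Matrix.mulVec_mulVec, Matrix.dotProduct_mulVec, Matrix.vecMul_transpose]
    rw [hf_def, hg_def]
    simp only
    rw [Matrix.add_mulVec, dotProduct_add, Matrix.smul_mulVec, dotProduct_smul,
      key, smul_eq_mul]
  have hherm : ∀ μ : ℝ, (Q + μ • (Bᵀ * B)).IsHermitian := by
    intro μ
    simp [Matrix.IsHermitian, conjTranspose_add, conjTranspose_smul,
      conjTranspose_eq_transpose_of_trivial, Matrix.transpose_add,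
      Matrix.transpose_smul, Matrix.transpose_mul, transpose_transpose, hQ.eq]
  have hg0 : ∀ x, 0 ≤ g x := fun x =>
    Finset.sum_nonneg fun i _ => mul_self_nonneg _
  have hfscale : ∀ (c : ℝ) (x : Fin n → ℝ), f (c • x) = c ^ 2 * f x := by
    intro c x
    rw [hf_def]
    simp only [Matrix.mulVec_smul, dotProduct_smul, smul_dotProduct, smul_eq_mul]
    ring
  have hgscale : ∀ (c : ℝ) (x : Fin n → ℝ), g (c • x) = c ^ 2 * g x := by
    intro c x
    rw [hg_def]
    simp only [Matrix.mulVec_smul, dotProduct_smul, smul_dotProduct, smul_eq_mul]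
    ring
  have hfc : Continuous f := by
    rw [hf_def]
    simp only [dotProduct]
    exact continuous_finset_sum _ fun i _ =>
      (continuous_apply i).mul (quad_cont Q i)
  have hgc : Continuous g := by
    rw [hg_def]
    simp only [dotProduct]
    exact continuous_finset_sum _ fun i _ => (quad_cont B i).mul (quad_cont B i)
  constructor
  · intro h
    by_contra hc
    push_neg at hc
    have hseq : ∀ k : ℕ, ∃ y : Fin n → ℝ, ‖y‖ = 1 ∧ f y + (k : ℝ) * g y ≤ 0 := by
      intro k
      have hck := hc (k : ℝ)
      rw [Matrix.posDef_iff_dotProduct_mulVec] at hck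
      push_neg at hck
      obtain ⟨x, hx0, hxle⟩ := hck (hherm (k : ℝ))
      rw [star_trivial] at hxle
      replace hxle : f x + (k : ℝ) * g x ≤ 0 := by
        rw [← hform]; exact hxle
      have hxn : ‖x‖ ≠ 0 := norm_ne_zero_iff.mpr hx0
      refine ⟨‖x‖⁻¹ • x, ?_, ?_⟩
      · rw [norm_smul, norm_inv, norm_norm, inv_mul_cancel₀ hxn]
      · rw [hfscale, hgscale]
        have h2 : (0 : ℝ) ≤ (‖x‖⁻¹) ^ 2 := sq_nonneg _
        nlinarith
    choose u hu1 hu2 using hseq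
    have humem : ∀ k, u k ∈ Metric.sphere (0 : Fin n → ℝ) 1 := fun k => by
      rw [mem_sphere_zero_iff_norm]; exact hu1 k
    obtain ⟨x, hxmem, φ, hφ, hlim⟩ :=
      (isCompact_sphere (0 : Fin n → ℝ) 1).tendsto_subseq humem
    obtain ⟨z, hz, hzmin⟩ :=
      (isCompact_sphere (0 : Fin n → ℝ) 1).exists_isMinOn ⟨u 0, humem 0⟩
        hfc.continuousOn
    have hfk : ∀ k : ℕ, f (u k) ≤ 0 := by
      intro k
      have h1 := hu2 k
      have h2 := hg0 (u k)
      have h3 : (0 : ℝ) ≤ (k : ℝ) := Nat.cast_nonneg k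
      nlinarith
    have hkg : ∀ k : ℕ, (k : ℝ) * g (u k) ≤ -(f z) := by
      intro k
      have h1 := hu2 k
      have h2 : f z ≤ f (u k) := hzmin (humem k)
      linarith
    have hflim : Tendsto (fun k => f (u (φ k))) atTop (𝓝 (f x)) :=
      (hfc.tendsto x).comp hlim
    have hfx : f x ≤ 0 := le_of_tendsto' hflim fun k => hfk _
    have hglim : Tendsto (fun k => g (u (φ k))) atTop (𝓝 (g x)) :=
      (hgc.tendsto x).comp hlim
    have hzero : Tendsto (fun k : ℕ => -(f z) / (φ k : ℝ)) atTop (𝓝 0) :=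
      Tendsto.div_atTop tendsto_const_nhds
        (tendsto_natCast_atTop_atTop.comp hφ.tendsto_atTop)
    have hgxle : g x ≤ 0 := by
      refine le_of_tendsto_of_tendsto hglim hzero ?_
      filter_upwards [eventually_ge_atTop 1] with k hk
      have hφk : (1 : ℕ) ≤ φ k := le_trans hk (hφ.le_apply)
      have hφpos : (0 : ℝ) < (φ k : ℝ) := by exact_mod_cast hφk
      rw [le_div_iff₀ hφpos]
      have := hkg (φ k)
      linarith [this]
    have hgx : g x = 0 := le_antisymm hgxle (hg0 x)
    have hBx : B.mulVec x = 0 := by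
      rw [hg_def] at hgx
      exact dotProduct_self_eq_zero.mp hgx
    have hxne : x ≠ 0 := by
      rw [mem_sphere_zero_iff_norm] at hxmem
      intro h0
      rw [h0, norm_zero] at hxmem
      norm_num at hxmem
    have hpos : 0 < f x := h x hxne hBx
    linarith
  · rintro ⟨μ, hpd⟩ x hx hBx
    have h2 := hpd.dotProduct_mulVec_pos hx
    rw [star_trivial, hform] at h2
    have hgx : g x = 0 := by rw [hg_def]; simp [hBx]
    rw [hgx, mul_zero, add_zero] at h2
    exact h2
end

section
/- Let (A,B,C,D) be a discrete-time LTI system with state dimension n, input dimension m, output dimension p, such that (A,B) is controllable and (A,C) is observable. Let (u^d, y^d) be a length-N trajectory of the system, and suppose u^d is persistently exciting of order L + n. Then a pair (u|_L, y|_L) ∈ ℝ^{Lm}×ℝ^{Lp} is a length-L trajectory of the system if and only if there exists g ∈ ℝ^{N−L+1} such that 𝓗_L(u^d)·g = u|_L and 𝓗_L(y^d)·g = y|_L. -/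
open Matrix Finset

/-- Controllability matrix `[B, AB, …, A^{n-1}B]` of `(A, B)`. -/
noncomputable def ctrbMat {n m : ℕ} (A : Matrix (Fin n) (Fin n) ℝ)
    (B : Matrix (Fin n) (Fin m) ℝ) : Matrix (Fin n) (Fin n × Fin m) ℝ :=
  fun i c => (A ^ (c.1 : ℕ) * B) i c.2

/-- Observability matrix `[C; CA; …; CA^{n-1}]` of `(A, C)`. -/
noncomputable def obsvMat {n p : ℕ} (A : Matrix (Fin n) (Fin n) ℝ)
    (C : Matrix (Fin p) (Fin n) ℝ) : Matrix (Fin n × Fin p) (Fin n) ℝ :=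
  fun r j => (C * A ^ (r.1 : ℕ)) r.2 j



lemma my_vecMul_eq_zero_of_rank {r c : Type*} [Fintype r] [Fintype c]
    (M : Matrix r c ℝ) (h : M.rank = Fintype.card r) {v : r → ℝ} (hv : v ᵥ* M = 0) : v = 0 := by
  have hli : LinearIndependent ℝ (fun i => M i) := by
    rw [linearIndependent_iff_card_eq_finrank_span]
    rw [Matrix.rank_eq_finrank_span_row] at h
    exact h.symm
  have hinj := Matrix.vecMul_injective_iff.mpr hli
  have h0 : (0 : r → ℝ) ᵥ* M = 0 := Matrix.zero_vecMul M
  exact hinj (hv.trans h0.symm)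

lemma my_mulVec_surjective {r c : Type*} [Fintype r] [Fintype c] [DecidableEq c]
    (M : Matrix r c ℝ) (h : ∀ v : r → ℝ, v ᵥ* M = 0 → v = 0) :
    Function.Surjective M.mulVec := by
  have hinj : Function.Injective M.vecMul := by
    intro a b hab
    have hab' : a ᵥ* M = b ᵥ* M := hab
    have hs : (a - b) ᵥ* M = 0 := by
      rw [Matrix.sub_vecMul, hab', sub_self]
    have := h _ hs
    have := sub_eq_zero.mp this
    exact this
  have hli := Matrix.vecMul_injective_iff.mp hinj
  have hrank : M.rank = Fintype.card r := hli.rank_matrix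
  have hrange : LinearMap.range M.mulVecLin = ⊤ := by
    apply Submodule.eq_top_of_finrank_eq
    rw [show Module.finrank ℝ (LinearMap.range M.mulVecLin) = M.rank from rfl, hrank,
      Module.finrank_pi]
  intro b
  obtain ⟨g, hg⟩ := LinearMap.range_eq_top.mp hrange b
  exact ⟨g, hg⟩


lemma my_sum_dotProduct {ι q : Type*} [Fintype q] (s : Finset ι) (f : ι → (q → ℝ)) (w : q → ℝ) :
    (∑ i ∈ s, f i) ⬝ᵥ w = ∑ i ∈ s, f i ⬝ᵥ w := by
  simp only [dotProduct, Finset.sum_apply, Finset.sum_mul]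
  exact Finset.sum_comm

lemma my_sum_mulVec {ι q r : Type*} [Fintype q] (s : Finset ι) (f : ι → Matrix r q ℝ) (w : q → ℝ) :
    (∑ i ∈ s, f i) *ᵥ w = ∑ i ∈ s, f i *ᵥ w := by
  funext k
  show (∑ i ∈ s, f i) k ⬝ᵥ w = (∑ i ∈ s, f i *ᵥ w) k
  rw [show (∑ i ∈ s, f i) k = ∑ i ∈ s, f i k from Finset.sum_apply k s f]
  rw [my_sum_dotProduct, Finset.sum_apply]
  apply Finset.sum_congr rfl
  intro i _
  rfl

lemma key_ann {n m L N : ℕ}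
    (A : Matrix (Fin n) (Fin n) ℝ) (B : Matrix (Fin n) (Fin m) ℝ)
    (hctrb : ∀ ζ : Fin n → ℝ, (∀ s, s < n → ζ ᵥ* (A ^ s * B) = 0) → ζ = 0)
    (U : ℕ → Fin m → ℝ) (X : ℕ → Fin n → ℝ)
    (hLnN : L + n ≤ N)
    (hrec : ∀ k, k < N → X (k+1) = A.mulVec (X k) + B.mulVec (U k))
    (hpe : ∀ β : ℕ → Fin m → ℝ,
      (∀ j, j ≤ N - (L+n) → ∑ r ∈ Finset.range (L+n), β r ⬝ᵥ U (r+j) = 0) →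
      ∀ r, r < L+n → β r = 0)
    (η : ℕ → Fin m → ℝ) (ζ : Fin n → ℝ)
    (hann : ∀ j, j ≤ N - L → (∑ k ∈ Finset.range L, η k ⬝ᵥ U (k+j)) + ζ ⬝ᵥ X j = 0) :
    (∀ k, k < L → η k = 0) ∧ ζ = 0 := by
  have hNL : L ≤ N := by omega
  -- Step 1: shifted annihilation relations
  have hR : ∀ t, t ≤ n → ∀ j, t + j ≤ N - L →
      (ζ ᵥ* (A ^ t)) ⬝ᵥ X j
        + (∑ s ∈ Finset.range t, (ζ ᵥ* (A ^ (t-1-s) * B)) ⬝ᵥ U (s+j))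
        + ∑ k ∈ Finset.range L, η k ⬝ᵥ U (t+k+j) = 0 := by
    intro t
    induction t with
    | zero =>
      intro _ j hj
      simp only [pow_zero, Matrix.vecMul_one, Finset.range_zero, Finset.sum_empty, add_zero,
        Nat.zero_add, zero_add]
      linarith [hann j (by omega : j ≤ N - L)]
    | succ t ih =>
      intro ht j hj
      have ih' := ih (by omega) (j+1) (by omega)
      have hjN : j < N := by omega
      rw [hrec j hjN, dotProduct_add, Matrix.dotProduct_mulVec, Matrix.dotProduct_mulVec,
        Matrix.vecMul_vecMul, Matrix.vecMul_vecMul] at ih'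
      have e1 : ∑ s ∈ Finset.range (t+1), (ζ ᵥ* (A ^ (t+1-1-s) * B)) ⬝ᵥ U (s+j)
          = (∑ s ∈ Finset.range t, (ζ ᵥ* (A ^ (t-1-s) * B)) ⬝ᵥ U (s+(j+1)))
            + (ζ ᵥ* (A ^ t * B)) ⬝ᵥ U j := by
        rw [Finset.sum_range_succ']
        congr 1
        · apply Finset.sum_congr rfl
          intro s _
          rw [show t+1-1-(s+1) = t-1-s by omega, show s+1+j = s+(j+1) by omega]
        · rw [show t+1-1-0 = t by omega, Nat.zero_add]
      have e2 : ∑ k ∈ Finset.range L, η k ⬝ᵥ U (t+1+k+j)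
          = ∑ k ∈ Finset.range L, η k ⬝ᵥ U (t+k+(j+1)) := by
        apply Finset.sum_congr rfl
        intro k _
        rw [show t+1+k+j = t+k+(j+1) by omega]
      rw [pow_succ, e1, e2]
      linarith [ih']
  -- Step 2: Cayley–Hamilton
  set cp : ℕ → ℝ := fun t => (Matrix.charpoly A).coeff t with hcp
  have hdeg : (Matrix.charpoly A).natDegree = n := by
    rw [Matrix.charpoly_natDegree_eq_dim, Fintype.card_fin]
  have hCH : ∑ t ∈ Finset.range (n+1), cp t • A ^ t = 0 := by
    have h1 := Matrix.aeval_self_charpoly A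
    rw [Polynomial.aeval_eq_sum_range, hdeg] at h1
    exact h1
  have hcpn : cp n = 1 := by
    have hm := (Matrix.charpoly_monic A).coeff_natDegree
    rw [hdeg] at hm
    exact hm
  -- Step 3: the combined annihilator β of the deep Hankel matrix
  set β : ℕ → Fin m → ℝ := fun r =>
    ∑ t ∈ Finset.range (n+1), cp t •
      (if r < t then ζ ᵥ* (A ^ (t-1-r) * B) else if r - t < L then η (r-t) else 0) with hβ
  have hβann : ∀ j, j ≤ N - (L+n) → ∑ r ∈ Finset.range (L+n), β r ⬝ᵥ U (r+j) = 0 := by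
    intro j hj
    have step1 : ∑ r ∈ Finset.range (L+n), β r ⬝ᵥ U (r+j)
        = ∑ t ∈ Finset.range (n+1), cp t * ∑ r ∈ Finset.range (L+n),
            (if r < t then ζ ᵥ* (A ^ (t-1-r) * B) else if r - t < L then η (r-t) else 0)
              ⬝ᵥ U (r+j) := by
      rw [show ∑ r ∈ Finset.range (L+n), β r ⬝ᵥ U (r+j)
          = ∑ r ∈ Finset.range (L+n), ∑ t ∈ Finset.range (n+1),
              cp t * ((if r < t then ζ ᵥ* (A ^ (t-1-r) * B)
                else if r - t < L then η (r-t) else 0) ⬝ᵥ U (r+j)) from ?_,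
        Finset.sum_comm]
      · apply Finset.sum_congr rfl
        intro t _
        rw [Finset.mul_sum]
      · apply Finset.sum_congr rfl
        intro r _
        rw [hβ]
        rw [my_sum_dotProduct]
        apply Finset.sum_congr rfl
        intro t _
        rw [smul_dotProduct, smul_eq_mul]
    have hinner : ∀ t, t ∈ Finset.range (n+1) →
        (∑ r ∈ Finset.range (L+n),
          (if r < t then ζ ᵥ* (A ^ (t-1-r) * B) else if r - t < L then η (r-t) else 0)
            ⬝ᵥ U (r+j))
        = -((ζ ᵥ* (A ^ t)) ⬝ᵥ X j) := by
      intro t htmem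
      have ht : t ≤ n := by
        have := Finset.mem_range.mp htmem; omega
      have hsplit := (Finset.sum_range_add_sum_Ico
        (fun r => (if r < t then ζ ᵥ* (A ^ (t-1-r) * B) else if r - t < L then η (r-t) else 0)
          ⬝ᵥ U (r+j)) (show t ≤ L+n by omega)).symm
      rw [hsplit]
      have hfirst : ∑ r ∈ Finset.range t,
          (if r < t then ζ ᵥ* (A ^ (t-1-r) * B) else if r - t < L then η (r-t) else 0)
            ⬝ᵥ U (r+j)
          = ∑ s ∈ Finset.range t, (ζ ᵥ* (A ^ (t-1-s) * B)) ⬝ᵥ U (s+j) := by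
        apply Finset.sum_congr rfl
        intro r hr
        rw [if_pos (Finset.mem_range.mp hr)]
      have hsecond : ∑ r ∈ Finset.Ico t (L+n),
          (if r < t then ζ ᵥ* (A ^ (t-1-r) * B) else if r - t < L then η (r-t) else 0)
            ⬝ᵥ U (r+j)
          = ∑ k ∈ Finset.range L, η k ⬝ᵥ U (t+k+j) := by
        rw [Finset.sum_Ico_eq_sum_range]
        have h2 : ∑ k ∈ Finset.range (L+n-t),
            (if t+k < t then ζ ᵥ* (A ^ (t-1-(t+k)) * B)
              else if (t+k) - t < L then η ((t+k)-t) else 0) ⬝ᵥ U (t+k+j)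
            = ∑ k ∈ Finset.range (L+n-t), (if k < L then η k else 0) ⬝ᵥ U (t+k+j) := by
          apply Finset.sum_congr rfl
          intro k _
          rw [if_neg (by omega), show t+k-t = k by omega]
        rw [h2, ← Finset.sum_range_add_sum_Ico _ (show L ≤ L+n-t by omega)]
        have h3 : ∑ k ∈ Finset.Ico L (L+n-t), (if k < L then η k else 0) ⬝ᵥ U (t+k+j) = 0 := by
          apply Finset.sum_eq_zero
          intro k hk
          rw [if_neg (by have := (Finset.mem_Ico.mp hk).1; omega), zero_dotProduct]
        rw [h3, add_zero]
        apply Finset.sum_congr rfl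
        intro k hk
        rw [if_pos (Finset.mem_range.mp hk)]
      rw [hfirst, hsecond]
      have := hR t ht j (by omega)
      linarith [this]
    rw [step1, Finset.sum_congr rfl (fun t ht => by rw [hinner t ht])]
    have hfin : ∑ t ∈ Finset.range (n+1), cp t * -((ζ ᵥ* (A ^ t)) ⬝ᵥ X j)
        = -(ζ ⬝ᵥ ((∑ t ∈ Finset.range (n+1), cp t • A ^ t) *ᵥ X j)) := by
      rw [my_sum_mulVec]
      rw [show ζ ⬝ᵥ (∑ t ∈ Finset.range (n+1), (cp t • A ^ t) *ᵥ X j)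
          = ∑ t ∈ Finset.range (n+1), ζ ⬝ᵥ ((cp t • A ^ t) *ᵥ X j) from ?_]
      · rw [← Finset.sum_neg_distrib]
        apply Finset.sum_congr rfl
        intro t _
        rw [Matrix.smul_mulVec, dotProduct_smul, smul_eq_mul,
          Matrix.dotProduct_mulVec]
        ring
      · simp only [dotProduct, Finset.sum_apply, Finset.mul_sum]
        exact Finset.sum_comm
    rw [hfin, hCH, Matrix.zero_mulVec, dotProduct_zero, neg_zero]
  have hβz : ∀ r, r < L+n → β r = 0 := hpe β hβann
  -- Step 4: extract η = 0
  have hη : ∀ q, q < L → η q = 0 := by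
    have key : ∀ d q, q < L → L - q ≤ d → η q = 0 := by
      intro d
      induction d with
      | zero => intro q hq h0; omega
      | succ d ih =>
        intro q hq _
        have hb := hβz (n+q) (by omega)
        simp only [hβ] at hb
        rw [Finset.sum_range_succ] at hb
        have hlast : (if n+q < n then ζ ᵥ* (A ^ (n-1-(n+q)) * B)
            else if n+q-n < L then η (n+q-n) else 0) = η q := by
          rw [if_neg (by omega), if_pos (show n+q-n < L by omega), show n+q-n = q by omega]
        have hrest : ∑ t ∈ Finset.range n, cp t •
            (if n+q < t then ζ ᵥ* (A ^ (t-1-(n+q)) * B)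
              else if n+q-t < L then η (n+q-t) else 0) = 0 := by
          apply Finset.sum_eq_zero
          intro t htm
          have htn : t < n := Finset.mem_range.mp htm
          rw [if_neg (by omega)]
          by_cases hcase : n+q-t < L
          · rw [if_pos hcase, ih (n+q-t) hcase (by omega), smul_zero]
          · rw [if_neg hcase, smul_zero]
        rw [hrest, hlast, hcpn, zero_add, one_smul] at hb
        exact hb
    exact fun q hq => key L q hq (by omega)
  -- Step 5: extract ζ = 0 via controllability
  have hc : ∀ s, s < n → ζ ᵥ* (A ^ s * B) = 0 := by
    intro s
    induction s using Nat.strong_induction_on with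
    | _ s ih =>
      intro hs
      have hb := hβz (n-1-s) (by omega)
      simp only [hβ] at hb
      rw [Finset.sum_range_succ] at hb
      have hlast : (if n-1-s < n then ζ ᵥ* (A ^ (n-1-(n-1-s)) * B)
          else if n-1-s-n < L then η (n-1-s-n) else 0) = ζ ᵥ* (A ^ s * B) := by
        rw [if_pos (by omega), show n-1-(n-1-s) = s by omega]
      have hrest : ∑ t ∈ Finset.range n, cp t •
          (if n-1-s < t then ζ ᵥ* (A ^ (t-1-(n-1-s)) * B)
            else if n-1-s-t < L then η (n-1-s-t) else 0) = 0 := by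
        apply Finset.sum_eq_zero
        intro t htm
        have htn : t < n := Finset.mem_range.mp htm
        by_cases hlt : n-1-s < t
        · rw [if_pos hlt, ih (t-1-(n-1-s)) (by omega) (by omega), smul_zero]
        · rw [if_neg hlt]
          by_cases h2 : n-1-s-t < L
          · rw [if_pos h2, hη _ h2, smul_zero]
          · rw [if_neg h2, smul_zero]
      rw [hrest, hlast, hcpn, zero_add, one_smul] at hb
      exact hb
  exact ⟨hη, hctrb ζ hc⟩

lemma my_lincomb_push {ι q1 q2 r : Type*} [Fintype q1] [Fintype q2] (s : Finset ι)
    (P : Matrix r q1 ℝ) (Q : Matrix r q2 ℝ) (g : ι → ℝ) (a : ι → q1 → ℝ) (b : ι → q2 → ℝ) :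
    ∑ j ∈ s, g j • (P *ᵥ a j + Q *ᵥ b j)
      = P *ᵥ (∑ j ∈ s, g j • a j) + Q *ᵥ (∑ j ∈ s, g j • b j) := by
  simp only [← Matrix.mulVecLin_apply, smul_add, Finset.sum_add_distrib, map_sum, _root_.map_smul]

/-- **Willems' Fundamental Lemma.** Let `(A, B, C, D)` be controllable and observable,
let `(u^d, y^d)` be a length-`N` trajectory whose input is persistently exciting of
order `L + n`. Then `(u|_L, y|_L)` is a length-`L` trajectory of the system if and only
if there exists `g` with `𝓗_L(u^d) g = u|_L` and `𝓗_L(y^d) g = y|_L`. -/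
theorem fundamental_lemma {n m p N L : ℕ}
    (A : Matrix (Fin n) (Fin n) ℝ) (B : Matrix (Fin n) (Fin m) ℝ)
    (C : Matrix (Fin p) (Fin n) ℝ) (D : Matrix (Fin p) (Fin m) ℝ)
    (hctrb : (ctrbMat A B).rank = n)
    (hobsv : (obsvMat A C).rank = n)
    (ud : Fin N → Fin m → ℝ) (yd : Fin N → Fin p → ℝ)
    (hdata : IsTrajectory A B C D N ud yd)
    (hLn : L + n ≤ N) (hLN : L ≤ N)
    (hpe : (blockHankel (L + n) hLn ud).rank = (L + n) * m)
    (u : Fin L → Fin m → ℝ) (y : Fin L → Fin p → ℝ) :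
    IsTrajectory A B C D L u y ↔
      ∃ g : Fin (N - L + 1) → ℝ,
        (blockHankel L hLN ud).mulVec g = (fun c : Fin L × Fin m => u c.1 c.2) ∧
        (blockHankel L hLN yd).mulVec g = (fun c : Fin L × Fin p => y c.1 c.2) := by
  classical
  obtain ⟨xd, hxd⟩ := hdata
  set U : ℕ → Fin m → ℝ := fun k => if h : k < N then ud ⟨k, h⟩ else 0 with hU
  set Yd : ℕ → Fin p → ℝ := fun k => if h : k < N then yd ⟨k, h⟩ else 0 with hYdd
  set Xs : ℕ → Fin n → ℝ := fun k => if h : k < N+1 then xd ⟨k, h⟩ else 0 with hXs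
  have hUval : ∀ k (h : k < N), U k = ud ⟨k, h⟩ := by
    intro k h; rw [hU]; simp only [dif_pos h]
  have hYval : ∀ k (h : k < N), Yd k = yd ⟨k, h⟩ := by
    intro k h; rw [hYdd]; simp only [dif_pos h]
  have hXval : ∀ k (h : k < N+1), Xs k = xd ⟨k, h⟩ := by
    intro k h; rw [hXs]; simp only [dif_pos h]
  have hrec : ∀ k, k < N → Xs (k+1) = A *ᵥ (Xs k) + B *ᵥ (U k) := by
    intro k hk
    rw [hXval (k+1) (by omega), hXval k (by omega), hUval k hk]
    exact (hxd ⟨k, hk⟩).1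
  have hout : ∀ k, k < N → Yd k = C *ᵥ (Xs k) + D *ᵥ (U k) := by
    intro k hk
    rw [hYval k hk, hXval k (by omega), hUval k hk]
    exact (hxd ⟨k, hk⟩).2
  have hHconv : ∀ {q : ℕ} (z : Fin N → Fin q → ℝ) (Z : ℕ → Fin q → ℝ),
      (∀ k (h : k < N), Z k = z ⟨k, h⟩) → ∀ (g : Fin (N-L+1) → ℝ) (c : Fin L × Fin q),
      ((blockHankel L hLN z) *ᵥ g) c = (∑ j : Fin (N-L+1), g j • Z (c.1.1 + j.1)) c.2 := by
    intro q z Z hZ g c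
    simp only [Matrix.mulVec, dotProduct, blockHankel, Finset.sum_apply, Pi.smul_apply,
      smul_eq_mul]
    apply Finset.sum_congr rfl
    intro j _
    rw [hZ (c.1.1 + j.1) (by have h1 := c.1.isLt; have h2 := j.isLt; omega)]
    ring
  -- main computation: pushing a kernel representation through the dynamics
  have hmain : ∀ g : Fin (N-L+1) → ℝ,
      (blockHankel L hLN ud) *ᵥ g = (fun c : Fin L × Fin m => u c.1 c.2) →
      (∀ k : Fin L, (∑ j : Fin (N-L+1), g j • U (k.1+j.1)) = u k)
      ∧ (∀ k : Fin L,
        (∑ j : Fin (N-L+1), g j • Xs (k.1+1+j.1))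
          = A *ᵥ (∑ j : Fin (N-L+1), g j • Xs (k.1+j.1)) + B *ᵥ u k)
      ∧ (∀ k : Fin L,
        (∑ j : Fin (N-L+1), g j • Yd (k.1+j.1))
          = C *ᵥ (∑ j : Fin (N-L+1), g j • Xs (k.1+j.1)) + D *ᵥ u k) := by
    intro g hgu
    have hu : ∀ k : Fin L, (∑ j : Fin (N-L+1), g j • U (k.1+j.1)) = u k := by
      intro k
      funext i
      have h1 := congrFun hgu (k, i)
      rw [hHconv ud U hUval g (k, i)] at h1
      exact h1
    refine ⟨hu, fun k => ?_, fun k => ?_⟩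
    · have e : ∀ j : Fin (N-L+1), Xs (k.1+1+j.1) = A *ᵥ Xs (k.1+j.1) + B *ᵥ U (k.1+j.1) := by
        intro j
        rw [show k.1+1+j.1 = (k.1+j.1)+1 by omega]
        exact hrec (k.1+j.1) (by have h1 := k.isLt; have h2 := j.isLt; omega)
      rw [Finset.sum_congr rfl (fun j _ => by rw [e j]), my_lincomb_push, hu k]
    · have e : ∀ j : Fin (N-L+1), Yd (k.1+j.1) = C *ᵥ Xs (k.1+j.1) + D *ᵥ U (k.1+j.1) := by
        intro j
        exact hout (k.1+j.1) (by have h1 := k.isLt; have h2 := j.isLt; omega)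
      rw [Finset.sum_congr rfl (fun j _ => by rw [e j]), my_lincomb_push, hu k]
  constructor
  · -- hard direction
    rintro ⟨x, hx⟩
    -- persistency of excitation, in pointwise form
    have hpe' : ∀ β : ℕ → Fin m → ℝ,
        (∀ j, j ≤ N - (L+n) → ∑ r ∈ Finset.range (L+n), β r ⬝ᵥ U (r+j) = 0) →
        ∀ r, r < L+n → β r = 0 := by
      intro β hβ r hr
      have hcard : (blockHankel (L+n) hLn ud).rank = Fintype.card (Fin (L+n) × Fin m) := by
        rw [hpe, Fintype.card_prod, Fintype.card_fin, Fintype.card_fin]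
      have hv : (fun c : Fin (L+n) × Fin m => β c.1.1 c.2) ᵥ* (blockHankel (L+n) hLn ud) = 0 := by
        funext j
        have hj : j.1 ≤ N - (L+n) := by have := j.isLt; omega
        have h1 := hβ j.1 hj
        rw [Finset.sum_range (fun r => β r ⬝ᵥ U (r + j.1))] at h1
        simp only [Matrix.vecMul, dotProduct, blockHankel, Pi.zero_apply]
        rw [Fintype.sum_prod_type]
        rw [← h1]
        apply Finset.sum_congr rfl
        intro r _
        apply Finset.sum_congr rfl
        intro i _
        rw [hUval (r.1 + j.1) (by have h2 := r.isLt; have h3 := j.isLt; omega)]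
      have h0 := my_vecMul_eq_zero_of_rank _ hcard hv
      funext i
      exact congrFun h0 (⟨r, hr⟩, i)
    -- controllability, in pointwise form
    have hctrb' : ∀ ζ : Fin n → ℝ, (∀ s, s < n → ζ ᵥ* (A ^ s * B) = 0) → ζ = 0 := by
      intro ζ hz
      apply my_vecMul_eq_zero_of_rank (ctrbMat A B) (by rw [hctrb, Fintype.card_fin])
      funext c
      have h1 := congrFun (hz c.1.1 c.1.isLt) c.2
      simp only [Matrix.vecMul, dotProduct, Pi.zero_apply] at h1 ⊢
      rw [← h1]
      apply Finset.sum_congr rfl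
      intro i _
      rfl
    -- the combined input/state matrix is surjective
    set Mc : Matrix ((Fin L × Fin m) ⊕ Fin n) (Fin (N-L+1)) ℝ :=
      Matrix.of (fun r j => Sum.elim
        (fun c : Fin L × Fin m => U (c.1.1 + j.1) c.2) (fun i => Xs j.1 i) r) with hMc
    have hsurj : Function.Surjective Mc.mulVec := by
      apply my_mulVec_surjective
      intro v hv
      set η : ℕ → Fin m → ℝ :=
        fun k => if h : k < L then (fun i => v (Sum.inl (⟨k, h⟩, i))) else 0 with hηdef
      set ζ : Fin n → ℝ := fun i => v (Sum.inr i) with hζdef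
      have hann : ∀ j, j ≤ N - L →
          (∑ k ∈ Finset.range L, η k ⬝ᵥ U (k+j)) + ζ ⬝ᵥ Xs j = 0 := by
        intro j hj
        have h1 := congrFun hv ⟨j, by omega⟩
        have e : (∑ k ∈ Finset.range L, η k ⬝ᵥ U (k+j)) + ζ ⬝ᵥ Xs j
            = ∑ rr : (Fin L × Fin m) ⊕ Fin n, v rr * Mc rr ⟨j, by omega⟩ := by
          rw [Fintype.sum_sum_type]
          congr 1
          · rw [Finset.sum_range (fun k => η k ⬝ᵥ U (k + j)), Fintype.sum_prod_type]
            apply Finset.sum_congr rfl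
            intro k _
            have hηk : η (k.1) = fun i => v (Sum.inl (k, i)) := by
              rw [hηdef]
              simp only [dif_pos k.isLt, Fin.eta]
            rw [hηk]
            rfl
        rw [e]
        exact h1
      obtain ⟨hη0, hζ0⟩ := key_ann A B hctrb' U Xs hLn hrec hpe' η ζ hann
      funext r
      cases r with
      | inl c =>
        have h2 := congrFun (hη0 c.1.1 c.1.isLt) c.2
        rw [hηdef] at h2
        simp only [dif_pos c.1.isLt, Pi.zero_apply] at h2
        simpa using h2
      | inr i => exact congrFun hζ0 i
    obtain ⟨g, hg⟩ := hsurj (Sum.elim (fun c : Fin L × Fin m => u c.1 c.2) (fun i => x 0 i))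
    have hgu : (blockHankel L hLN ud) *ᵥ g = fun c : Fin L × Fin m => u c.1 c.2 := by
      funext c
      rw [hHconv ud U hUval g c]
      have h1 := congrFun hg (Sum.inl c)
      rw [show (Mc *ᵥ g) (Sum.inl c) = (∑ j : Fin (N-L+1), g j • U (c.1.1+j.1)) c.2 from ?_] at h1
      · exact h1
      · simp only [Matrix.mulVec, dotProduct, hMc, Matrix.of_apply, Sum.elim_inl,
          Finset.sum_apply, Pi.smul_apply, smul_eq_mul]
        apply Finset.sum_congr rfl
        intro j _
        ring
    obtain ⟨hu, hxrec, hyrec⟩ := hmain g hgu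
    set x' : Fin (L+1) → Fin n → ℝ :=
      fun kk => ∑ j : Fin (N-L+1), g j • Xs (kk.1+j.1) with hx'
    have hx0 : x' 0 = x 0 := by
      funext i
      have h1 := congrFun hg (Sum.inr i)
      rw [hx']
      simp only [Fin.val_zero, Nat.zero_add, Sum.elim_inr]
      rw [show (Mc *ᵥ g) (Sum.inr i) = ∑ j : Fin (N-L+1), g j • Xs j.1 i from ?_] at h1
      · simpa using h1
      · simp only [Matrix.mulVec, dotProduct, hMc, Matrix.of_apply, Sum.elim_inr,
          smul_eq_mul]
        apply Finset.sum_congr rfl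
        intro j _
        ring
    have hxeq : ∀ kk (hkk : kk < L+1), x ⟨kk, hkk⟩ = x' ⟨kk, hkk⟩ := by
      intro kk
      induction kk with
      | zero => intro hkk; exact hx0.symm
      | succ k ih =>
        intro hkk
        have hkL : k < L := by omega
        have h1 := (hx ⟨k, hkL⟩).1
        have h2 : x (⟨k, hkL⟩ : Fin L).succ = x ⟨k+1, hkk⟩ := rfl
        have h3 : x (⟨k, hkL⟩ : Fin L).castSucc = x ⟨k, by omega⟩ := rfl
        rw [h2, h3] at h1
        rw [h1, ih (by omega)]
        have h4 := hxrec ⟨k, hkL⟩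
        rw [hx']
        exact h4.symm
    refine ⟨g, hgu, ?_⟩
    funext c
    rw [hHconv yd Yd hYval g c]
    have h5 := hyrec c.1
    rw [h5]
    have h6 := (hx c.1).2
    have h7 : x c.1.castSucc = x' c.1.castSucc := by
      have := hxeq c.1.castSucc.1 c.1.castSucc.isLt
      exact this
    rw [hx'] at h7
    simp only [Fin.coe_castSucc] at h7
    rw [← h7, ← h6]
  · -- easy direction
    rintro ⟨g, hgu, hgy⟩
    obtain ⟨hu, hxrec, hyrec⟩ := hmain g hgu
    refine ⟨fun kk => ∑ j : Fin (N-L+1), g j • Xs (kk.1 + j.1), fun k => ⟨?_, ?_⟩⟩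
    · show (∑ j : Fin (N-L+1), g j • Xs (k.succ.1 + j.1)) = _
      simp only [Fin.val_succ, Fin.coe_castSucc]
      exact hxrec k
    · have h1 : y k = ∑ j : Fin (N-L+1), g j • Yd (k.1+j.1) := by
        funext i
        have h2 := congrFun hgy (k, i)
        rw [hHconv yd Yd hYval g (k, i)] at h2
        exact h2.symm
      rw [h1]
      simp only [Fin.coe_castSucc]
      exact hyrec k
end

section
/- Let D(ξ) = Σ_{i=0}^{ℓ} D_i ξ^i with D_i ∈ ℝ^{p×p} be a polynomial matrix whose determinant det D(ξ) is not the zero polynomial. Then the following are equivalent: (i) every sequence y : ℕ → ℝ^p satisfying Σ_{i=0}^{ℓ} D_i y(k+i) = 0 for all k ∈ ℕ converges to 0 as k → ∞; (ii) every λ ∈ ℂ with det D(λ) = 0 satisfies |λ| < 1. -/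
open Matrix Polynomial

/-- The polynomial matrix `D(ξ) = Σ_{i=0}^{ℓ} D_i ξ^i` built from its coefficient
matrices. -/
noncomputable def polyMatrix {a b ℓ : ℕ} (D : Fin (ℓ + 1) → Matrix (Fin a) (Fin b) ℝ) :
    Matrix (Fin a) (Fin b) (Polynomial ℝ) :=
  fun i j => ∑ k : Fin (ℓ + 1), Polynomial.C (D k i j) * Polynomial.X ^ (k : ℕ)

/-!
Write `σ` for the shift of sequences, `(σ x)(k) = x (k + 1)`. Multiplying `D(σ) y = 0` by the
adjugate of `D` shows that every component of a solution satisfies the scalar equation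
`det D(σ) yᵢ = 0`. Over `ℂ`, `det D = c ∏ (ξ - λ)`, so decay reduces to first-order equations
`x (k + 1) = λ x k + z k` with `z → 0`, whose solutions tend to `0` when `|λ| < 1`.
Conversely, a root `λ` with `|λ| ≥ 1` and a kernel vector `v` of `D(λ)` give the complex
solution `λ ^ k • v`; its real and imaginary parts are real solutions, and they cannot both
tend to `0`.
-/

open Filter Topology

noncomputable def seqShift (R : Type*) [Semiring R] : Module.End R (ℕ → R) :=
  LinearMap.funLeft R R (· + 1)

def IsKernelSolution {R m n : Type*} [NonUnitalNonAssocSemiring R] [Fintype n] {ℓ : ℕ}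
    (D : Fin (ℓ + 1) → Matrix m n R) (y : ℕ → n → R) : Prop :=
  ∀ k, ∑ i : Fin (ℓ + 1), D i *ᵥ y (k + i) = 0

section seqShift

variable {R : Type*}

lemma seqShift_pow_apply [Semiring R] (i : ℕ) (x : ℕ → R) (k : ℕ) :
    (seqShift R ^ i) x k = x (k + i) := by
  induction i generalizing k with
  | zero => rfl
  | succ i ih =>
    rw [pow_succ', Module.End.mul_apply]
    exact (ih (k + 1)).trans (congrArg x (Nat.add_right_comm k 1 i))

lemma aeval_seqShift_apply [CommSemiring R] (q : R[X]) {n : ℕ} (hn : q.natDegree < n)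
    (x : ℕ → R) (k : ℕ) :
    aeval (seqShift R) q x k = ∑ i ∈ Finset.range n, q.coeff i * x (k + i) := by
  simp [aeval_eq_sum_range' hn, seqShift_pow_apply]

lemma aeval_seqShift_X_sub_C [CommRing R] (a : R) (x : ℕ → R) :
    aeval (seqShift R) (X - C a) x = fun k => x (k + 1) - a * x k := by
  ext k
  simp [seqShift, Module.algebraMap_end_apply]

lemma aeval_seqShift_map {S : Type*} [CommSemiring R] [CommSemiring S] (f : R →+* S) (q : R[X])
    (x : ℕ → R) : aeval (seqShift S) (q.map f) (f ∘ x) = f ∘ aeval (seqShift R) q x := by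
  have hn : q.natDegree < q.natDegree + 1 := Nat.lt_succ_self _
  ext k
  simp [aeval_seqShift_apply _ hn, aeval_seqShift_apply _ (natDegree_map_le.trans_lt hn)]

end seqShift

theorem Matrix.det_smul_eq_zero_of_sum_smul_eq_zero {S V n : Type*} [CommRing S] [AddCommGroup V]
    [Module S V] [Fintype n] [DecidableEq n] (P : Matrix n n S) {u : n → V}
    (hu : ∀ i, ∑ j, P i j • u j = 0) (i : n) : P.det • u i = 0 :=
  calc P.det • u i = ∑ j, (P.adjugate * P) i j • u j := by
        simp [adjugate_mul, Matrix.one_apply]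
    _ = ∑ l, P.adjugate i l • ∑ j, P l j • u j := by
        simp only [mul_apply, Finset.sum_smul, Finset.smul_sum, mul_smul]
        exact Finset.sum_comm
    _ = 0 := by simp [hu]

lemma IsKernelSolution.aeval_seqShift_det_polyMatrix {p ℓ : ℕ}
    {D : Fin (ℓ + 1) → Matrix (Fin p) (Fin p) ℝ} {y : ℕ → Fin p → ℝ} (hy : IsKernelSolution D y)
    (i : Fin p) :
    aeval (seqShift ℝ) (polyMatrix D).det (fun k => y k i) = 0 := by
  -- work in `ℕ → ℝ` viewed as an `ℝ[X]`-module, `X` acting by the shift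
  apply (Module.AEval'.of (seqShift ℝ)).injective
  rw [← Module.End.smul_def, Module.AEval.of_aeval_smul, map_zero]
  refine (polyMatrix D).det_smul_eq_zero_of_sum_smul_eq_zero
    (u := fun j => Module.AEval'.of (seqShift ℝ) fun k => y k j) (fun a => ?_) i
  simp_rw [← Module.AEval.of_aeval_smul, Module.End.smul_def, ← map_sum,
    LinearEquiv.map_eq_zero_iff]
  ext k
  have h := congrFun (hy k) a
  simp only [Finset.sum_apply, Pi.zero_apply, mulVec, dotProduct] at h
  rw [Finset.sum_apply, Pi.zero_apply, ← h, Finset.sum_comm]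
  simp [polyMatrix, seqShift_pow_apply]

lemma tendsto_zero_of_le_mul_add {r : ℝ} (hr0 : 0 ≤ r) (hr1 : r < 1) {a b : ℕ → ℝ}
    (ha : ∀ k, 0 ≤ a k) (hab : ∀ k, a (k + 1) ≤ r * a k + b k)
    (hb : Tendsto b atTop (𝓝 0)) : Tendsto a atTop (𝓝 0) := by
  refine tendsto_order.2 ⟨fun c hc => .of_forall fun k => hc.trans_le (ha k), fun ε hε => ?_⟩
  obtain ⟨N, hN⟩ := eventually_atTop.1 <|
    hb.eventually (gt_mem_nhds (show 0 < ε * (1 - r) / 2 by nlinarith))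
  have hbound : ∀ j, a (N + j) ≤ r ^ j * a N + ε / 2 := by
    intro j
    induction j with
    | zero => simp; positivity
    | succ j ih =>
      calc a (N + j + 1) ≤ r * a (N + j) + ε * (1 - r) / 2 := by
            linarith [hab (N + j), hN (N + j) (Nat.le_add_right N j)]
        _ ≤ r * (r ^ j * a N + ε / 2) + ε * (1 - r) / 2 := by gcongr
        _ = r ^ (j + 1) * a N + ε / 2 := by ring
  have hpow : Tendsto (fun j => r ^ j * a N) atTop (𝓝 0) := by
    simpa using (tendsto_pow_atTop_nhds_zero_of_lt_one hr0 hr1).mul_const (a N)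
  obtain ⟨J, hJ⟩ := eventually_atTop.1 (hpow.eventually (gt_mem_nhds (half_pos hε)))
  refine eventually_atTop.2 ⟨N + J, fun k hk => ?_⟩
  obtain ⟨j, rfl⟩ := Nat.exists_eq_add_of_le (le_of_add_le_left hk)
  linarith [hbound j, hJ j (by omega)]

lemma tendsto_zero_of_tendsto_sub_mul {R : Type*} [SeminormedRing R] {a : R} (ha : ‖a‖ < 1)
    {x : ℕ → R} (hx : Tendsto (fun k => x (k + 1) - a * x k) atTop (𝓝 0)) :
    Tendsto x atTop (𝓝 0) := by
  rw [tendsto_zero_iff_norm_tendsto_zero] at hx ⊢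
  refine tendsto_zero_of_le_mul_add (norm_nonneg a) ha (fun k => norm_nonneg _) (fun k => ?_) hx
  calc ‖x (k + 1)‖ = ‖a * x k + (x (k + 1) - a * x k)‖ := by rw [add_sub_cancel]
    _ ≤ ‖a‖ * ‖x k‖ + ‖x (k + 1) - a * x k‖ :=
        (norm_add_le _ _).trans (add_le_add (norm_mul_le _ _) le_rfl)

lemma tendsto_zero_of_aeval_seqShift_prod_eq_zero {R : Type*} [SeminormedCommRing R]
    (s : Multiset R) (hs : ∀ a ∈ s, ‖a‖ < 1) {x : ℕ → R}
    (hx : aeval (seqShift R) (s.map fun a => X - C a).prod x = 0) :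
    Tendsto x atTop (𝓝 0) := by
  induction s using Multiset.induction_on generalizing x with
  | empty =>
    rw [Multiset.map_zero, Multiset.prod_zero, map_one, Module.End.one_apply] at hx
    rw [hx]
    exact tendsto_const_nhds
  | cons a s ih =>
    rw [Multiset.map_cons, Multiset.prod_cons, mul_comm, map_mul, Module.End.mul_apply] at hx
    refine tendsto_zero_of_tendsto_sub_mul (hs a (Multiset.mem_cons_self a s)) ?_
    rw [← aeval_seqShift_X_sub_C]
    exact ih (fun b hb => hs b (Multiset.mem_cons_of_mem hb)) hx

lemma tendsto_zero_of_aeval_seqShift_eq_zero {𝕜 : Type*} [NormedField 𝕜] [IsAlgClosed 𝕜]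
    {q : 𝕜[X]} (hq : q ≠ 0) (hroots : ∀ μ, q.IsRoot μ → ‖μ‖ < 1) {x : ℕ → 𝕜}
    (hx : aeval (seqShift 𝕜) q x = 0) : Tendsto x atTop (𝓝 0) := by
  rw [← C_leadingCoeff_mul_prod_multiset_X_sub_C (p := q) IsAlgClosed.card_roots_eq_natDegree,
    map_mul, aeval_C, Module.End.mul_apply, Module.algebraMap_end_apply, smul_eq_zero] at hx
  exact tendsto_zero_of_aeval_seqShift_prod_eq_zero _
    (fun μ hμ => hroots μ (isRoot_of_mem_roots hμ)) (hx.resolve_left (leadingCoeff_ne_zero.2 hq))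

lemma polyMatrix_map_aeval {A : Type*} [Semiring A] [Algebra ℝ A] {p q ℓ : ℕ}
    (D : Fin (ℓ + 1) → Matrix (Fin p) (Fin q) ℝ) (lam : A) :
    (polyMatrix D).map (aeval lam) =
      ∑ i : Fin (ℓ + 1), lam ^ (i : ℕ) • (D i).map (algebraMap ℝ A) := by
  ext a b
  simp [polyMatrix, Matrix.sum_apply, Algebra.commutes]

lemma isKernelSolution_pow_smul {R m n : Type*} [CommSemiring R] [Fintype n] {ℓ : ℕ}
    (D : Fin (ℓ + 1) → Matrix m n R) {lam : R} {v : n → R}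
    (hv : (∑ i : Fin (ℓ + 1), lam ^ (i : ℕ) • D i) *ᵥ v = 0) :
    IsKernelSolution D fun k => lam ^ k • v := by
  intro k
  simp only [sum_mulVec, smul_mulVec] at hv
  simp only [mulVec_smul, pow_add, mul_smul, ← Finset.smul_sum, hv, smul_zero]

lemma IsKernelSolution.comp_linearMap {R A m n : Type*} [CommSemiring R] [Semiring A]
    [Algebra R A] [Fintype n] {ℓ : ℕ} {D : Fin (ℓ + 1) → Matrix m n R} {w : ℕ → n → A}
    (hw : IsKernelSolution (fun i => (D i).map (algebraMap R A)) w) (f : A →ₗ[R] R) :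
    IsKernelSolution D fun k j => f (w k j) := by
  intro k
  ext a
  simpa [mulVec, dotProduct, Finset.sum_apply, ← Algebra.smul_def] using
    congrArg f (congrFun (hw k) a)

lemma Complex.tendsto_pi_of_tendsto_re_im {α ι : Type*} {l : Filter α} {w : α → ι → ℂ}
    (hre : Tendsto (fun k j => (w k j).re) l (𝓝 0))
    (him : Tendsto (fun k j => (w k j).im) l (𝓝 0)) : Tendsto w l (𝓝 0) := by
  refine tendsto_pi_nhds.2 fun j => ?_
  have hofReal := Complex.continuous_ofReal.tendsto 0
  simpa [Complex.re_add_im] using ((hofReal.comp (tendsto_pi_nhds.1 hre j)).add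
    ((hofReal.comp (tendsto_pi_nhds.1 him j)).mul_const Complex.I))

lemma norm_lt_one_of_aeval_det_polyMatrix_eq_zero {p ℓ : ℕ}
    {D : Fin (ℓ + 1) → Matrix (Fin p) (Fin p) ℝ}
    (hstable : ∀ y, IsKernelSolution D y → Tendsto y atTop (𝓝 0)) {lam : ℂ}
    (hlam : aeval lam (polyMatrix D).det = 0) : ‖lam‖ < 1 := by
  by_contra! hlam1
  obtain ⟨v, hv0, hv⟩ : ∃ v ≠ 0, (polyMatrix D).map (aeval lam) *ᵥ v = 0 := by
    rw [exists_mulVec_eq_zero_iff, ← AlgHom.mapMatrix_apply, ← AlgHom.map_det, hlam]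
  rw [polyMatrix_map_aeval] at hv
  have hw := isKernelSolution_pow_smul _ hv
  have hlim : Tendsto (fun k => lam ^ k • v) atTop (𝓝 0) :=
    Complex.tendsto_pi_of_tendsto_re_im (hstable _ (hw.comp_linearMap Complex.reLm))
      (hstable _ (hw.comp_linearMap Complex.imLm))
  have hgrowth : ∀ k, ‖v‖ ≤ ‖lam ^ k • v‖ := fun k => by
    rw [norm_smul, norm_pow]
    exact le_mul_of_one_le_left (norm_nonneg v) (one_le_pow₀ hlam1)
  exact hv0 <| norm_le_zero_iff.1 <|
    ge_of_tendsto' (tendsto_zero_iff_norm_tendsto_zero.1 hlim) hgrowth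

lemma IsKernelSolution.tendsto_zero {p ℓ : ℕ} {D : Fin (ℓ + 1) → Matrix (Fin p) (Fin p) ℝ}
    {y : ℕ → Fin p → ℝ} (hy : IsKernelSolution D y)
    (hroots : ∀ lam : ℂ, aeval lam (polyMatrix D).det = 0 → ‖lam‖ < 1) :
    Tendsto y atTop (𝓝 0) := by
  -- if `det D = 0`, every `λ`, in particular `1`, would be a root
  have hdet : (polyMatrix D).det ≠ 0 := fun h => by simpa [h] using hroots 1
  refine tendsto_pi_nhds.2 fun i => ?_
  have hx : aeval (seqShift ℂ) ((polyMatrix D).det.map (algebraMap ℝ ℂ))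
      (algebraMap ℝ ℂ ∘ fun k => y k i) = 0 := by
    rw [aeval_seqShift_map, hy.aeval_seqShift_det_polyMatrix i]
    ext
    simp
  have hlim := tendsto_zero_of_aeval_seqShift_eq_zero
    ((Polynomial.map_ne_zero_iff (algebraMap ℝ ℂ).injective).2 hdet)
    (fun μ hμ => hroots μ (by rwa [IsRoot, eval_map_algebraMap] at hμ)) hx
  simpa [Function.comp_def] using (Complex.continuous_re.tendsto 0).comp hlim

theorem kernel_asymptotically_stable_iff_roots_in_unit_disc_general {p ℓ : ℕ}
    (D : Fin (ℓ + 1) → Matrix (Fin p) (Fin p) ℝ) :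
    (∀ y : ℕ → Fin p → ℝ,
        (∀ k : ℕ, ∑ i : Fin (ℓ + 1), (D i).mulVec (y (k + i)) = 0) →
        Filter.Tendsto (fun k => ‖y k‖) Filter.atTop (nhds 0)) ↔
      ∀ lam : ℂ, Polynomial.aeval lam (polyMatrix D).det = 0 → ‖lam‖ < 1 := by
  simp only [← tendsto_zero_iff_norm_tendsto_zero]
  exact ⟨fun hstable _ => norm_lt_one_of_aeval_det_polyMatrix_eq_zero hstable,
    fun hroots _ hy => IsKernelSolution.tendsto_zero hy hroots⟩

/-- **Asymptotic stability of an autonomous kernel representation.** Let `D(ξ)` be a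
square polynomial matrix with `det D(ξ)` not the zero polynomial. Every solution of
`D(q) y = 0` converges to zero if and only if every root `λ ∈ ℂ` of `det D` satisfies
`|λ| < 1`. -/
theorem kernel_asymptotically_stable_iff_roots_in_unit_disc {p ℓ : ℕ}
    (D : Fin (ℓ + 1) → Matrix (Fin p) (Fin p) ℝ)
    (hD : (polyMatrix D).det ≠ 0) :
    (∀ y : ℕ → Fin p → ℝ,
        (∀ k : ℕ, ∑ i : Fin (ℓ + 1), (D i).mulVec (y (k + i)) = 0) →
        Filter.Tendsto (fun k => ‖y k‖) Filter.atTop (nhds 0)) ↔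
      ∀ lam : ℂ, Polynomial.aeval lam (polyMatrix D).det = 0 → ‖lam‖ < 1 :=
  kernel_asymptotically_stable_iff_roots_in_unit_disc_general D
end

section
/- Let R(ξ) ∈ ℝ^{g×q}[ξ] be a polynomial matrix and U(ξ) ∈ ℝ^{g×g}[ξ] a unimodular polynomial matrix, i.e., det U(ξ) is a nonzero constant polynomial. Then for every sequence w : ℕ → ℝ^q, w satisfies R(q)w = 0 if and only if w satisfies (U·R)(q)w = 0, where U·R denotes the product of the polynomial matrices. -/
open Matrix Polynomial

/-- A sequence `w : ℕ → ℝ^b` is in the kernel of the polynomial matrix difference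
operator `P(q)`: for every `k` and every row `i`,
`Σ_j Σ_d (coeff of ξ^d in P i j) · w(k+d)_j = 0`. -/
def SatKernel {a b : ℕ} (P : Matrix (Fin a) (Fin b) (Polynomial ℝ))
    (w : ℕ → Fin b → ℝ) : Prop :=
  ∀ (k : ℕ) (i : Fin a), ∑ j : Fin b, (P i j).sum (fun d c => c * w (k + d) j) = 0

/-- The forward shift operator on sequences. -/
noncomputable def shiftOp : Module.End ℝ (ℕ → ℝ) where
  toFun v := fun k => v (k + 1)
  map_add' _ _ := rfl
  map_smul' _ _ := rfl

lemma shiftOp_pow (d : ℕ) (v : ℕ → ℝ) (k : ℕ) : (shiftOp ^ d) v k = v (k + d) := by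
  induction d generalizing v k with
  | zero => rfl
  | succ n ih =>
    rw [pow_succ]
    show (shiftOp ^ n) (shiftOp v) k = _
    rw [ih]
    show v (k + n + 1) = v (k + (n + 1))
    ring_nf

lemma aeval_shiftOp (p : Polynomial ℝ) (v : ℕ → ℝ) (k : ℕ) :
    (Polynomial.aeval shiftOp p) v k = p.sum (fun d c => c * v (k + d)) := by
  rw [Polynomial.aeval_def, Polynomial.eval₂_eq_sum, Polynomial.sum, Polynomial.sum]
  rw [LinearMap.coe_sum, Finset.sum_apply, Finset.sum_apply]
  refine Finset.sum_congr rfl fun d _ => ?_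
  show (algebraMap ℝ (Module.End ℝ (ℕ → ℝ)) (p.coeff d) * shiftOp ^ d) v k = _
  rw [Module.End.mul_apply, Module.algebraMap_end_apply]
  simp [shiftOp_pow]

lemma satKernel_iff {a b : ℕ} (P : Matrix (Fin a) (Fin b) (Polynomial ℝ))
    (w : ℕ → Fin b → ℝ) :
    SatKernel P w ↔ ∀ i : Fin a,
      (∑ j : Fin b, Polynomial.aeval shiftOp (P i j) (fun m => w m j)) = 0 := by
  constructor
  · intro h i
    funext k
    rw [Finset.sum_apply]
    simpa [aeval_shiftOp] using h k i
  · intro h k i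
    have := congrFun (h i) k
    rw [Finset.sum_apply] at this
    simpa [aeval_shiftOp] using this

lemma satKernel_mul {a g b : ℕ} (A : Matrix (Fin a) (Fin g) (Polynomial ℝ))
    (B : Matrix (Fin g) (Fin b) (Polynomial ℝ)) (w : ℕ → Fin b → ℝ)
    (hB : SatKernel B w) : SatKernel (A * B) w := by
  rw [satKernel_iff] at hB ⊢
  intro i
  have step : ∀ j : Fin b,
      Polynomial.aeval shiftOp ((A * B) i j) (fun m => w m j)
      = ∑ l : Fin g, Polynomial.aeval shiftOp (A i l)
          (Polynomial.aeval shiftOp (B l j) (fun m => w m j)) := by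
    intro j
    rw [Matrix.mul_apply, map_sum, LinearMap.coe_sum, Finset.sum_apply]
    refine Finset.sum_congr rfl fun l _ => ?_
    rw [_root_.map_mul, Module.End.mul_apply]
  simp only [step]
  rw [Finset.sum_comm]
  refine Finset.sum_eq_zero fun l _ => ?_
  rw [← map_sum, hB l, map_zero]

/-- **Unimodular premultiplication preserves the behavior.** For a polynomial matrix
`R(ξ)` and a unimodular polynomial matrix `U(ξ)` (i.e. `det U` is a nonzero constant),
a sequence `w` satisfies `R(q) w = 0` if and only if it satisfies `(U R)(q) w = 0`. -/
theorem kernel_eq_of_unimodular {g q : ℕ}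
    (R : Matrix (Fin g) (Fin q) (Polynomial ℝ))
    (U : Matrix (Fin g) (Fin g) (Polynomial ℝ))
    (hU : ∃ c : ℝ, c ≠ 0 ∧ U.det = Polynomial.C c)
    (w : ℕ → Fin q → ℝ) :
    SatKernel R w ↔ SatKernel (U * R) w := by
  obtain ⟨c, hc, hdet⟩ := hU
  constructor
  · exact satKernel_mul U R w
  · intro h
    have key : (Polynomial.C c⁻¹ • U.adjugate) * (U * R) = R := by
      rw [← Matrix.mul_assoc, Matrix.smul_mul, Matrix.adjugate_mul, hdet]
      rw [smul_smul, ← Polynomial.C_mul, inv_mul_cancel₀ hc]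
      simp
    have := satKernel_mul (Polynomial.C c⁻¹ • U.adjugate) (U * R) w h
    rwa [key] at this
end
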